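/- arXiv:2406.15228 — 2 statements merged into one kernel-verified Lean document; each statement's English description precedes it below -/
import Mathlib

section
/- The 'make distinct' operation — applying, for i = 0 to n-1, a swap of qubits qv2[n] and qv2[i] controlled on qv1[i] — maps the product state W_{n+1} ⊗ W_n (where W_{n+1} lives on the first n+1 qubits of qv1 and W_n on the first n qubits of qv2, remaining qubits |0⟩) to the uniform superposition (1/√(n(n+1))) Σ_{0 ≤ i ≤ n, 0 ≤ j ≤ n, i ≠ j} |e_i⟩ ⊗ |e_j⟩. -/
noncomputable section

/-- One-hot bit string of length `n+1` with the single `1` at position `i`. -/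
def oneHot (n : ℕ) (i : Fin (n + 1)) : Fin (n + 1) → Bool :=
  fun j => decide (j = i)

/-- Swap of the bits at positions `n` and `i` of the second register, controlled on
bit `i` of the first register (a classical reversible map on basis states). -/
def ctrlSwapStep (n : ℕ) (i : Fin (n + 1)) :
    ((Fin (n + 1) → Bool) × (Fin (n + 1) → Bool)) →
      ((Fin (n + 1) → Bool) × (Fin (n + 1) → Bool)) :=
  fun p => (p.1, if p.1 i then p.2 ∘ (Equiv.swap (Fin.last n) i) else p.2)

/-- The `make distinct` operation: apply the controlled swaps for `i = 0, …, n-1` in order. -/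
def makeDistinct (n : ℕ) (p : (Fin (n + 1) → Bool) × (Fin (n + 1) → Bool)) :
    (Fin (n + 1) → Bool) × (Fin (n + 1) → Bool) :=
  (List.finRange n).foldl (fun q i => ctrlSwapStep n i.castSucc q) p

/-! On a basis state `(e_i, g)` only the swap controlled by qubit `i` fires, so `makeDistinct`
acts as `g ↦ g ∘ swap n i` (the identity when `i = n`). Hence `(e_i, e_j)` with `j < n` goes to
`(e_i, e_{swap n i j})`, and for fixed `i` the map `j ↦ swap n i j` is a bijection from
`{0, …, n-1}` onto `{0, …, n} \ {i}`. -/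

open Finset

lemma ctrlSwapStep_oneHot (n : ℕ) (k i : Fin (n + 1)) (g : Fin (n + 1) → Bool) :
    ctrlSwapStep n k (oneHot n i, g) =
      (oneHot n i, if k = i then g ∘ Equiv.swap (Fin.last n) i else g) := by
  by_cases h : k = i <;> simp [ctrlSwapStep, oneHot, h]

lemma foldl_ctrlSwapStep_oneHot (n : ℕ) (i : Fin (n + 1)) {l : List (Fin n)} (hl : l.Nodup)
    (g : Fin (n + 1) → Bool) :
    l.foldl (fun q k => ctrlSwapStep n k.castSucc q) (oneHot n i, g) =
      (oneHot n i, if i ∈ l.map Fin.castSucc then g ∘ Equiv.swap (Fin.last n) i else g) := by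
  induction l generalizing g with
  | nil => simp
  | cons a l ih =>
    obtain ⟨ha, hl⟩ := List.nodup_cons.mp hl
    rw [List.foldl_cons, ctrlSwapStep_oneHot, ih hl]
    by_cases hai : a.castSucc = i
    · have hi : i ∉ l.map Fin.castSucc := by
        simpa [← hai, Fin.castSucc_inj] using ha
      simp [hai, hi]
    · simp [hai, Ne.symm hai]

lemma makeDistinct_oneHot (n : ℕ) (i : Fin (n + 1)) (g : Fin (n + 1) → Bool) :
    makeDistinct n (oneHot n i, g) = (oneHot n i, g ∘ Equiv.swap (Fin.last n) i) := by
  rw [makeDistinct, foldl_ctrlSwapStep_oneHot n i (List.nodup_finRange n)]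
  by_cases hi : i = Fin.last n
  · subst hi
    simp
  · simp [Fin.exists_castSucc_eq, hi]

lemma oneHot_comp_swap (n : ℕ) (i a b : Fin (n + 1)) :
    oneHot n i ∘ Equiv.swap a b = oneHot n (Equiv.swap a b i) := by
  funext k
  simp [oneHot, Equiv.swap_apply_eq_iff]

lemma sum_castSucc_swap_last {M : Type*} [AddCancelCommMonoid M] (n : ℕ) (i : Fin (n + 1))
    (f : Fin (n + 1) → M) :
    ∑ j : Fin n, f (Equiv.swap (Fin.last n) i j.castSucc) = ∑ b ∈ univ.erase i, f b := by
  apply add_right_cancel (b := f i)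
  calc ∑ j : Fin n, f (Equiv.swap (Fin.last n) i j.castSucc) + f i
      = ∑ b, f (Equiv.swap (Fin.last n) i b) := by
        rw [Fin.sum_univ_castSucc, Equiv.swap_apply_left]
    _ = ∑ b, f b := Equiv.sum_comp _ f
    _ = ∑ b ∈ univ.erase i, f b + f i := (sum_erase_add _ _ (mem_univ i)).symm

theorem stmt14 (n : ℕ) :
    ((Real.sqrt ((n + 1) * n) : ℂ))⁻¹ •
        ∑ i : Fin (n + 1), ∑ j : Fin n,
          (EuclideanSpace.single (makeDistinct n (oneHot n i, oneHot n j.castSucc)) 1 :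
            EuclideanSpace ℂ ((Fin (n + 1) → Bool) × (Fin (n + 1) → Bool)))
      = ((Real.sqrt ((n + 1) * n) : ℂ))⁻¹ •
        ∑ p ∈ Finset.univ.filter (fun p : Fin (n + 1) × Fin (n + 1) => p.1 ≠ p.2),
          EuclideanSpace.single (oneHot n p.1, oneHot n p.2) 1 := by
  congr 1
  simp only [makeDistinct_oneHot, oneHot_comp_swap]
  rw [sum_filter, Fintype.sum_prod_type]
  refine sum_congr rfl fun i _ => ?_
  rw [sum_castSucc_swap_last n i (fun b => EuclideanSpace.single (oneHot n i, oneHot n b) 1),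
    ← sum_filter, filter_ne]
end
end

section
/- The classical dynamic programming algorithm for the PBS problem is correct: for each node x and site i, the recursively defined value c_i^x = min over feasible assignments j : pred(x) → [N] (pairwise distinct and all distinct from i) of Σ_{y ∈ pred(x)} (c_{j(y)}^y + c^y_{i,j(y)}), with c_i^x = 0 for leaves, satisfies c_i^x = min over feasible assignments f of the subtree T_x with f(x) = i of Σ_{(r,s) edge in T_x} c^r_{f(r),f(s)}. -/
open scoped Classical

noncomputable section

/-- A rooted tree on nodes `Fin M`, given by a parent map. -/
structure PBSTree (M : ℕ) where
  parent : Fin M → Fin M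
  root : Fin M
  parent_root : parent root = root
  reaches_root : ∀ x : Fin M, ∃ k : ℕ, parent^[k] x = root

/-- The set of predecessors (children) of a node. -/
def PBSTree.pred {M : ℕ} (T : PBSTree M) (x : Fin M) : Finset (Fin M) :=
  Finset.univ.filter (fun y => T.parent y = x ∧ y ≠ x)

/-- The nodes of the subtree `T_x` rooted at `x`. -/
def PBSTree.subtree {M : ℕ} (T : PBSTree M) (x : Fin M) : Finset (Fin M) :=
  Finset.univ.filter (fun z => ∃ k : ℕ, T.parent^[k] z = x)

/-- Assignments `j` of sites to the predecessors of `x` that are pairwise distinct and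
all distinct from the site `i` of `x` (the values outside `pred x` are irrelevant). -/
def Jset (M N : ℕ) (T : PBSTree M) (x : Fin M) (i : Fin N) : Finset (Fin M → Fin N) :=
  Finset.univ.filter (fun j => (∀ y ∈ T.pred x, j y ≠ i) ∧
    (∀ y ∈ T.pred x, ∀ z ∈ T.pred x, y ≠ z → j y ≠ j z))

/-- Feasible assignments of the subtree `T_x` with `f x = i`: for every node `z` of the
subtree, `f` is injective on `{z} ∪ pred z` (values outside the subtree are irrelevant). -/
def FeasSub (M N : ℕ) (T : PBSTree M) (x : Fin M) (i : Fin N) : Finset (Fin M → Fin N) :=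
  Finset.univ.filter (fun f => f x = i ∧ ∀ z ∈ T.subtree x,
    (∀ r ∈ T.pred z, f r ≠ f z) ∧
    (∀ r ∈ T.pred z, ∀ s ∈ T.pred z, r ≠ s → f r ≠ f s))

namespace PBSTree
variable {M : ℕ} (T : PBSTree M)

lemma mem_subtree {z x : Fin M} : z ∈ T.subtree x ↔ ∃ k, T.parent^[k] z = x := by
  simp [subtree]

lemma mem_pred {y x : Fin M} : y ∈ T.pred x ↔ T.parent y = x ∧ y ≠ x := by
  simp [pred]

lemma self_mem_subtree (x : Fin M) : x ∈ T.subtree x := (T.mem_subtree).2 ⟨0, rfl⟩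

lemma eq_root_of_periodic {x : Fin M} {k : ℕ} (hk : 0 < k) (h : T.parent^[k] x = x) :
    x = T.root := by
  obtain ⟨n, hn⟩ := T.reaches_root x
  rcases Nat.eq_zero_or_pos n with h0 | h0
  · simpa [h0] using hn
  have hkn : T.parent^[k * n] x = x := by
    rw [Function.iterate_mul]
    exact Function.iterate_fixed h n
  have hle : n ≤ k * n := Nat.le_mul_of_pos_left n hk
  have h2 : T.parent^[(k * n - n) + n] x = T.root := by
    rw [Function.iterate_add_apply, hn]
    exact Function.iterate_fixed T.parent_root _
  rw [Nat.sub_add_cancel hle, hkn] at h2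
  exact h2

lemma not_mem_subtree_pred {x y : Fin M} (hy : y ∈ T.pred x) : x ∉ T.subtree y := by
  rw [T.mem_pred] at hy
  intro hx
  obtain ⟨k, hk⟩ := T.mem_subtree.1 hx
  have hper : T.parent^[k + 1] x = x := by
    rw [Function.iterate_succ_apply', hk, hy.1]
  have hroot : x = T.root := T.eq_root_of_periodic (Nat.succ_pos k) hper
  have : y = T.root := by
    rw [← hk, hroot]
    exact Function.iterate_fixed T.parent_root _
  exact hy.2 (this.trans hroot.symm)

lemma subtree_trans {z x : Fin M} (hz : z ∈ T.subtree x) : T.subtree z ⊆ T.subtree x := by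
  obtain ⟨l, hl⟩ := T.mem_subtree.1 hz
  intro w hw
  obtain ⟨k, hk⟩ := T.mem_subtree.1 hw
  exact T.mem_subtree.2 ⟨l + k, by rw [Function.iterate_add_apply, hk, hl]⟩

lemma pred_mem_subtree {y x : Fin M} (hy : y ∈ T.pred x) : y ∈ T.subtree x :=
  T.mem_subtree.2 ⟨1, by simpa using (T.mem_pred.1 hy).1⟩

lemma subtree_subset_of_pred {y x : Fin M} (hy : y ∈ T.pred x) :
    T.subtree y ⊆ T.subtree x := T.subtree_trans (T.pred_mem_subtree hy)

lemma card_lt_of_pred {y x : Fin M} (hy : y ∈ T.pred x) :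
    (T.subtree y).card < (T.subtree x).card :=
  Finset.card_lt_card ⟨T.subtree_subset_of_pred hy,
    fun hsub => T.not_mem_subtree_pred hy (hsub (T.self_mem_subtree x))⟩

lemma eq_of_mem_subtrees_aux {x y y' : Fin M} (hy : y ∈ T.pred x) (hy' : y' ∈ T.pred x)
    {k l : ℕ} {z : Fin M} (hkl : k ≤ l) (hk : T.parent^[k] z = y)
    (hl : T.parent^[l] z = y') : y = y' := by
  have key : T.parent^[l - k] y = y' := by
    rw [← hk, ← Function.iterate_add_apply]
    rw [Nat.sub_add_cancel hkl]
    exact hl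
  rcases Nat.eq_zero_or_pos (l - k) with h0 | h0
  · simpa [h0] using key
  · exfalso
    have h1 : T.parent^[(l - k - 1) + 1] y = y' := by
      rw [Nat.sub_add_cancel h0]; exact key
    rw [Function.iterate_succ_apply, (T.mem_pred.1 hy).1] at h1
    exact T.not_mem_subtree_pred hy' (T.mem_subtree.2 ⟨_, h1⟩)

lemma eq_of_mem_subtrees {x y y' : Fin M} (hy : y ∈ T.pred x) (hy' : y' ∈ T.pred x)
    {z : Fin M} (hz : z ∈ T.subtree y) (hz' : z ∈ T.subtree y') : y = y' := by
  obtain ⟨k, hk⟩ := T.mem_subtree.1 hz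
  obtain ⟨l, hl⟩ := T.mem_subtree.1 hz'
  rcases le_total k l with h | h
  · exact T.eq_of_mem_subtrees_aux hy hy' h hk hl
  · exact (T.eq_of_mem_subtrees_aux hy' hy h hl hk).symm

lemma disjoint_subtrees {x y y' : Fin M} (hy : y ∈ T.pred x) (hy' : y' ∈ T.pred x)
    (hne : y ≠ y') : Disjoint (T.subtree y) (T.subtree y') :=
  Finset.disjoint_left.2 fun _ hz hz' => hne (T.eq_of_mem_subtrees hy hy' hz hz')

lemma parent_mem_subtree {z y : Fin M} (hz : z ∈ T.subtree y) (hne : z ≠ y) :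
    T.parent z ∈ T.subtree y := by
  obtain ⟨k, hk⟩ := T.mem_subtree.1 hz
  rcases Nat.eq_zero_or_pos k with h0 | h0
  · exact absurd (by simpa [h0] using hk) hne
  · refine T.mem_subtree.2 ⟨k - 1, ?_⟩
    rw [← Function.iterate_succ_apply]
    have hk1 : (k - 1).succ = k := by omega
    rw [hk1]; exact hk

lemma pred_subset_subtree {z : Fin M} : T.pred z ⊆ T.subtree z := fun r hr =>
  T.mem_subtree.2 ⟨1, by simpa using (T.mem_pred.1 hr).1⟩

lemma erase_subtree_eq {x : Fin M} :
    (T.subtree x).erase x = (T.pred x).biUnion (fun y => T.subtree y) := by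
  ext z
  simp only [Finset.mem_erase, Finset.mem_biUnion]
  constructor
  · rintro ⟨hzx, hz⟩
    obtain ⟨k, hk⟩ := T.mem_subtree.1 hz
    have hex : ∃ k, T.parent^[k] z = x := ⟨k, hk⟩
    set k0 := Nat.find hex with hk0
    have hfind : T.parent^[k0] z = x := Nat.find_spec hex
    have hk0pos : 0 < k0 := by
      rcases Nat.eq_zero_or_pos k0 with h0 | h0
      · exact absurd (by simpa [h0] using hfind) hzx
      · exact h0
    refine ⟨T.parent^[k0 - 1] z, ?_, ?_⟩
    · refine T.mem_pred.2 ⟨?_, ?_⟩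
      · rw [← Function.iterate_succ_apply' T.parent (k0 - 1) z,
          show (k0 - 1).succ = k0 by omega]
        exact hfind
      · intro heq
        exact absurd heq (Nat.find_min hex (Nat.sub_lt hk0pos one_pos))
    · exact T.mem_subtree.2 ⟨k0 - 1, rfl⟩
  · rintro ⟨y, hy, hzy⟩
    exact ⟨fun h => T.not_mem_subtree_pred hy (h ▸ hzy),
      T.subtree_subset_of_pred hy hzy⟩

end PBSTree

lemma mem_Jset' {M N : ℕ} {T : PBSTree M} {x : Fin M} {i : Fin N} {j : Fin M → Fin N} :
    j ∈ Jset M N T x i ↔ (∀ y ∈ T.pred x, j y ≠ i) ∧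
      (∀ y ∈ T.pred x, ∀ z ∈ T.pred x, y ≠ z → j y ≠ j z) := by
  simp [Jset]

lemma mem_FeasSub' {M N : ℕ} {T : PBSTree M} {x : Fin M} {i : Fin N} {f : Fin M → Fin N} :
    f ∈ FeasSub M N T x i ↔ f x = i ∧ ∀ z ∈ T.subtree x,
      (∀ r ∈ T.pred z, f r ≠ f z) ∧
      (∀ r ∈ T.pred z, ∀ s ∈ T.pred z, r ≠ s → f r ≠ f s) := by
  simp [FeasSub]

lemma sum_decomp {M N : ℕ} (T : PBSTree M) (c : Fin M → Fin N → Fin N → ℝ)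
    (f : Fin M → Fin N) (x : Fin M) :
    ∑ z ∈ (T.subtree x).erase x, c z (f z) (f (T.parent z))
      = ∑ y ∈ T.pred x, (c y (f y) (f x)
          + ∑ z ∈ (T.subtree y).erase y, c z (f z) (f (T.parent z))) := by
  rw [T.erase_subtree_eq, Finset.sum_biUnion]
  · refine Finset.sum_congr rfl fun y hy => ?_
    rw [← Finset.add_sum_erase _ _ (T.self_mem_subtree y), (T.mem_pred.1 hy).1]
  · intro y hy y' hy' hne
    exact T.disjoint_subtrees (Finset.mem_coe.1 hy) (Finset.mem_coe.1 hy') hne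

theorem stmt15 (M N : ℕ) (T : PBSTree M)
    (c : Fin M → Fin N → Fin N → ℝ)
    (hsym : ∀ r i j, c r i j = c r j i)
    (cTab : Fin M → Fin N → ℝ)
    (hJ : ∀ (x : Fin M) (i : Fin N), (Jset M N T x i).Nonempty)
    (hF : ∀ (x : Fin M) (i : Fin N), (FeasSub M N T x i).Nonempty)
    (hrec : ∀ (x : Fin M) (i : Fin N),
      cTab x i = (Jset M N T x i).inf' (hJ x i)
        (fun j => ∑ y ∈ T.pred x, (cTab y (j y) + c y i (j y)))) :
    ∀ (x : Fin M) (i : Fin N),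
      cTab x i = (FeasSub M N T x i).inf' (hF x i)
        (fun f => ∑ z ∈ (T.subtree x).erase x, c z (f z) (f (T.parent z))) := by
  suffices H : ∀ n : ℕ, ∀ x : Fin M, (T.subtree x).card ≤ n → ∀ i : Fin N,
      cTab x i = (FeasSub M N T x i).inf' (hF x i)
        (fun f => ∑ z ∈ (T.subtree x).erase x, c z (f z) (f (T.parent z))) by
    exact fun x i => H (T.subtree x).card x le_rfl i
  intro n
  induction n with
  | zero =>
    intro x hx i
    have := Finset.card_pos.2 ⟨x, T.self_mem_subtree x⟩
    omega
  | succ n IH =>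
    intro x hx i
    have IH' : ∀ y ∈ T.pred x, ∀ i' : Fin N,
        cTab y i' = (FeasSub M N T y i').inf' (hF y i')
          (fun f => ∑ z ∈ (T.subtree y).erase y, c z (f z) (f (T.parent z))) := by
      intro y hy i'
      have := T.card_lt_of_pred hy
      exact IH y (by omega) i'
    apply le_antisymm
    · -- cTab x i ≤ inf' over FeasSub
      apply Finset.le_inf'
      intro f hf
      obtain ⟨hfx, hfeas⟩ := mem_FeasSub'.1 hf
      have hfJ : f ∈ Jset M N T x i := by
        refine mem_Jset'.2 ⟨?_, (hfeas x (T.self_mem_subtree x)).2⟩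
        intro y hy
        rw [← hfx]
        exact (hfeas x (T.self_mem_subtree x)).1 y hy
      calc cTab x i ≤ ∑ y ∈ T.pred x, (cTab y (f y) + c y i (f y)) := by
              rw [hrec x i]; exact Finset.inf'_le _ hfJ
        _ ≤ ∑ z ∈ (T.subtree x).erase x, c z (f z) (f (T.parent z)) := by
              rw [sum_decomp T c f x]
              refine Finset.sum_le_sum fun y hy => ?_
              have hfy : f ∈ FeasSub M N T y (f y) :=
                mem_FeasSub'.2 ⟨rfl, fun z hz => hfeas z (T.subtree_subset_of_pred hy hz)⟩
              have h1 : cTab y (f y)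
                  ≤ ∑ z ∈ (T.subtree y).erase y, c z (f z) (f (T.parent z)) := by
                rw [IH' y hy (f y)]
                exact Finset.inf'_le _ hfy
              have h2 : c y i (f y) = c y (f y) (f x) := by rw [hsym, hfx]
              linarith
    · -- inf' over FeasSub ≤ cTab x i
      obtain ⟨j, hjmem, hjval⟩ := Finset.exists_mem_eq_inf' (hJ x i)
        (fun j => ∑ y ∈ T.pred x, (cTab y (j y) + c y i (j y)))
      have hg : ∀ y : Fin M, ∃ g, g ∈ FeasSub M N T y (j y) ∧
          (FeasSub M N T y (j y)).inf' (hF y (j y))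
            (fun f => ∑ z ∈ (T.subtree y).erase y, c z (f z) (f (T.parent z)))
          = ∑ z ∈ (T.subtree y).erase y, c z (g z) (g (T.parent z)) := by
        intro y
        obtain ⟨g, hg1, hg2⟩ := Finset.exists_mem_eq_inf' (hF y (j y))
          (fun f => ∑ z ∈ (T.subtree y).erase y, c z (f z) (f (T.parent z)))
        exact ⟨g, hg1, hg2⟩
      choose g hgmem hgval using hg
      have hgprop : ∀ y : Fin M, (g y) y = j y ∧ ∀ z ∈ T.subtree y,
          (∀ r ∈ T.pred z, g y r ≠ g y z) ∧
          (∀ r ∈ T.pred z, ∀ s ∈ T.pred z, r ≠ s → g y r ≠ g y s) :=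
        fun y => mem_FeasSub'.1 (hgmem y)
      let F : Fin M → Fin N := fun z =>
        if h : ∃ y, y ∈ T.pred x ∧ z ∈ T.subtree y then g h.choose z else i
      have hFeq : ∀ y ∈ T.pred x, ∀ z ∈ T.subtree y, F z = g y z := by
        intro y hy z hz
        have hex : ∃ y', y' ∈ T.pred x ∧ z ∈ T.subtree y' := ⟨y, hy, hz⟩
        have hch : hex.choose = y :=
          T.eq_of_mem_subtrees hex.choose_spec.1 hy hex.choose_spec.2 hz
        show (if h : ∃ y', y' ∈ T.pred x ∧ z ∈ T.subtree y' then g h.choose z else i) = g y z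
        rw [dif_pos hex, hch]
      have hFx : F x = i := by
        have hnex : ¬ ∃ y, y ∈ T.pred x ∧ x ∈ T.subtree y := by
          rintro ⟨y, hy, hxy⟩
          exact T.not_mem_subtree_pred hy hxy
        show (if h : ∃ y', y' ∈ T.pred x ∧ x ∈ T.subtree y' then g h.choose x else i) = i
        rw [dif_neg hnex]
      have hjmem' := mem_Jset'.1 hjmem
      have hFmem : F ∈ FeasSub M N T x i := by
        refine mem_FeasSub'.2 ⟨hFx, ?_⟩
        intro z hz
        by_cases hzx : z = x
        · subst hzx
          constructor
          · intro r hr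
            rw [hFx, hFeq r hr r (T.self_mem_subtree r), (hgprop r).1]
            exact hjmem'.1 r hr
          · intro r hr s hs hrs
            rw [hFeq r hr r (T.self_mem_subtree r), (hgprop r).1,
              hFeq s hs s (T.self_mem_subtree s), (hgprop s).1]
            exact hjmem'.2 r hr s hs hrs
        · have hz' : z ∈ (T.subtree x).erase x := Finset.mem_erase.2 ⟨hzx, hz⟩
          rw [T.erase_subtree_eq] at hz'
          obtain ⟨y, hy, hzy⟩ := Finset.mem_biUnion.1 hz'
          have hpr : ∀ r ∈ T.pred z, F r = g y r := fun r hr =>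
            hFeq y hy r (T.subtree_trans hzy (T.pred_subset_subtree hr))
          have hgz := (hgprop y).2 z hzy
          constructor
          · intro r hr
            rw [hpr r hr, hFeq y hy z hzy]
            exact hgz.1 r hr
          · intro r hr s hs hrs
            rw [hpr r hr, hpr s hs]
            exact hgz.2 r hr s hs hrs
      have hSval : ∑ z ∈ (T.subtree x).erase x, c z (F z) (F (T.parent z))
          = ∑ y ∈ T.pred x, (cTab y (j y) + c y i (j y)) := by
        rw [sum_decomp T c F x]
        refine Finset.sum_congr rfl fun y hy => ?_
        have h1 : F y = j y := by
          rw [hFeq y hy y (T.self_mem_subtree y), (hgprop y).1]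
        have h2 : ∑ z ∈ (T.subtree y).erase y, c z (F z) (F (T.parent z))
            = ∑ z ∈ (T.subtree y).erase y, c z (g y z) (g y (T.parent z)) := by
          refine Finset.sum_congr rfl fun z hz => ?_
          obtain ⟨hzy, hzs⟩ := Finset.mem_erase.1 hz
          rw [hFeq y hy z hzs, hFeq y hy (T.parent z) (T.parent_mem_subtree hzs hzy)]
        rw [h1, h2, hFx, ← hgval y, ← IH' y hy (j y), hsym]
        ring
      have hval : cTab x i = ∑ y ∈ T.pred x, (cTab y (j y) + c y i (j y)) := by
        rw [hrec x i, hjval]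
      rw [hval, ← hSval]
      exact Finset.inf'_le _ hFmem
end
end
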